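/- Let k₁, …, k_d be integers with each k_i ≥ 3, and define θ_{k}(l) = 2·arcsin( cos(π/k) / cosh(l/2) ) for l ≥ 0. If ∑_{i=1}^{d} (k_i - 2)π / k_i > 2π, then there exists a unique l > 0 such that ∑_{i=1}^{d} θ_{k_i}(l) = 2π. -/

import Mathlib

/-!
Each angle `θ_k(l) = 2 arcsin (cos (π / k) / cosh (l / 2))` is continuous in `l`, equals the
Euclidean angle `(k - 2) π / k` at `l = 0`, decreases strictly on `[0, ∞)` because `cosh` does and
`cos (π / k) > 0` for `k ≥ 3`, and tends to `0` as `l → ∞`. Hence the angle sum is a continuous,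
strictly decreasing function on `[0, ∞)` running from a value above `2π` down to `0`, and it
attains `2π` exactly once, by the intermediate value theorem.
-/

open Real Filter Topology Set

/-- Interior angle of a hyperbolic regular `k`-gon of side length `l`. -/
noncomputable def regularPolygonAngle (k l : ℝ) : ℝ :=
  2 * arcsin (cos (π / k) / cosh (l / 2))

lemma existsUnique_pos_eq_of_strictAntiOn {f : ℝ → ℝ} {a c : ℝ}
    (hcont : ContinuousOn f (Ici 0)) (hanti : StrictAntiOn f (Ici 0))
    (htop : Tendsto f atTop (𝓝 a)) (hac : a < c) (hc0 : c < f 0) : ∃! l, 0 < l ∧ f l = c := by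
  obtain ⟨L, hL, hfL⟩ : ∃ L, 0 < L ∧ f L < c :=
    ((eventually_gt_atTop 0).and (htop.eventually (gt_mem_nhds hac))).exists
  obtain ⟨l, hl, hfl⟩ : ∃ l ∈ Icc 0 L, f l = c :=
    intermediate_value_Icc' hL.le (hcont.mono Icc_subset_Ici_self) ⟨hfL.le, hc0.le⟩
  have hl_pos : 0 < l := hl.1.lt_of_ne (by rintro rfl; exact hc0.ne' hfl)
  refine ⟨l, ⟨hl_pos, hfl⟩, fun y ⟨hy, hfy⟩ ↦ ?_⟩
  exact hanti.injOn (mem_Ici.2 hy.le) (mem_Ici.2 hl_pos.le) (hfy.trans hfl.symm)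

lemma Finset.strictAntiOn_sum {ι : Type*} {s : Finset ι} (hs : s.Nonempty) {f : ι → ℝ → ℝ}
    {t : Set ℝ} (hf : ∀ i ∈ s, StrictAntiOn (f i) t) :
    StrictAntiOn (fun x ↦ ∑ i ∈ s, f i x) t :=
  fun _ ha _ hb hab ↦ Finset.sum_lt_sum_of_nonempty hs fun i hi ↦ hf i hi ha hb hab

lemma tendsto_cosh_atTop : Tendsto cosh atTop atTop := by
  refine tendsto_atTop_mono (fun x ↦ ?_) (tendsto_exp_atTop.atTop_div_const two_pos)
  rw [cosh_eq]
  gcongr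
  exact le_add_of_nonneg_right (exp_pos _).le

lemma continuous_regularPolygonAngle (k : ℝ) : Continuous (regularPolygonAngle k) := by
  unfold regularPolygonAngle
  fun_prop (disch := exact fun x ↦ (cosh_pos _).ne')

lemma regularPolygonAngle_zero {k : ℝ} (hk : 1 ≤ k) :
    regularPolygonAngle k 0 = (k - 2) * π / k := by
  have hπk : π / k ≤ π := div_le_self pi_pos.le hk
  have hπk_nonneg : 0 ≤ π / k := div_nonneg pi_pos.le (by linarith)
  rw [regularPolygonAngle, zero_div, cosh_zero, div_one, ← sin_pi_div_two_sub,
    arcsin_sin (by linarith) (by linarith)]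
  field_simp

lemma strictAntiOn_regularPolygonAngle {k : ℝ} (hk : 2 < k) :
    StrictAntiOn (regularPolygonAngle k) (Ici 0) := by
  have hcos : 0 < cos (π / k) := by
    apply cos_pos_of_mem_Ioo
    constructor
    · linarith [pi_pos, div_pos pi_pos (by linarith : (0 : ℝ) < k)]
    · rw [div_lt_div_iff₀ (by linarith) two_pos]
      nlinarith [pi_pos]
  intro a ha b hb hab
  have hcosh : cosh (a / 2) < cosh (b / 2) :=
    cosh_strictMonoOn (mem_Ici.2 (by linarith [mem_Ici.1 ha]))
      (mem_Ici.2 (by linarith [mem_Ici.1 hb])) (by linarith)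
  have harg : cos (π / k) / cosh (b / 2) < cos (π / k) / cosh (a / 2) :=
    div_lt_div_of_pos_left hcos (cosh_pos _) hcosh
  have hle_one : cos (π / k) / cosh (a / 2) ≤ 1 :=
    div_le_one_of_le₀ ((cos_le_one _).trans (one_le_cosh _)) (cosh_pos _).le
  have := arcsin_lt_arcsin (by linarith [div_pos hcos (cosh_pos (b / 2))]) harg hle_one
  unfold regularPolygonAngle
  linarith

lemma tendsto_regularPolygonAngle_atTop (k : ℝ) :
    Tendsto (regularPolygonAngle k) atTop (𝓝 0) := by
  have harg : Tendsto (fun l ↦ cos (π / k) / cosh (l / 2)) atTop (𝓝 0) :=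
    tendsto_const_nhds.div_atTop (tendsto_cosh_atTop.comp (tendsto_id.atTop_div_const two_pos))
  unfold regularPolygonAngle
  simpa using ((continuous_arcsin.tendsto 0).comp harg).const_mul 2

/-- If the Euclidean angle sum of the type vector `[k₁,…,k_d]` exceeds `2π`,
there exists a unique side length `l > 0` such that the hyperbolic interior angles
sum to `2π`. -/
theorem hyperbolic_side_length_exists_unique (d : ℕ) (k : Fin d → ℕ) (hk : ∀ i, 3 ≤ k i)
    (hsum : 2 * π < ∑ i, ((k i : ℝ) - 2) * π / (k i : ℝ)) :
    ∃! l : ℝ, 0 < l ∧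
      ∑ i, 2 * arcsin (cos (π / (k i : ℝ)) / cosh (l / 2)) = 2 * π := by
  have hk' : ∀ i, (3 : ℝ) ≤ k i := fun i ↦ by exact_mod_cast hk i
  have hne : (Finset.univ : Finset (Fin d)).Nonempty := by
    by_contra h
    rw [Finset.not_nonempty_iff_eq_empty.1 h, Finset.sum_empty] at hsum
    linarith [pi_pos]
  refine existsUnique_pos_eq_of_strictAntiOn (a := 0)
    (f := fun l ↦ ∑ i, regularPolygonAngle (k i) l)
    (continuous_finsetSum _ fun i _ ↦ continuous_regularPolygonAngle _).continuousOn
    (Finset.strictAntiOn_sum hne fun i _ ↦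
      strictAntiOn_regularPolygonAngle (by linarith [hk' i]))
    ?_ (by positivity) ?_
  · simpa using tendsto_finsetSum _ fun i _ ↦ tendsto_regularPolygonAngle_atTop (k i)
  · refine hsum.trans_eq (Finset.sum_congr rfl fun i _ ↦ ?_)
    exact (regularPolygonAngle_zero (by linarith [hk' i])).symm
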